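/- arXiv:1307.5632 — 3 statements merged into one kernel-verified Lean document; each statement's English description precedes it below -/
import Mathlib

section
/- Let A be a finite-dimensional Hopf algebra over a field k and let λ : A → k be a nonzero left integral in the dual. Then there exists a unique right integral Λ ∈ A such that λ(Λ) = 1. -/
/-!
The pairing `A → A*`, `a ↦ λ(a ·)`, is a linear isomorphism, and a right integral `Λ` with
`λ(Λ) = 1` is exactly the preimage of the counit. The engine is the identity
`b₍₁₎ λ(a b₍₂₎) = S(a₍₁₎) λ(a₍₂₎ b)`, obtained by expanding `λ(a₍₂₎ b) 1` with the integral
property and cancelling `S(a₍₁₎) a₍₂₎`. Given `c` with `λ(c) = 1` and a basis `eᵢ` with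
coordinate functionals `eᵢ*`, it shows that `Λ = ∑ᵢ eᵢ*(S²((c eᵢ)₍₁₎)) (c eᵢ)₍₂₎` satisfies
`λ(Λ b) = λ(c S(b₍₁₎) b₍₂₎) = ε(b)`, and then that `g(S Λ₍₁₎) Λ₍₂₎` is a preimage of an arbitrary
`g ∈ A*`. Surjectivity onto `A*` gives injectivity by counting dimensions, which yields
uniqueness of `Λ` and its right invariance.
-/

open scoped TensorProduct

open TensorProduct LinearMap Coalgebra

namespace HopfAlgebra

variable {R A : Type*} [CommSemiring R] [Semiring A]

section Bialgebra

variable [Bialgebra R A]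

variable (R) in
def IsRightIntegral (Λ : A) : Prop :=
  ∀ a : A, Λ * a = counit (R := R) a • Λ

def IsLeftIntegral (lam : A →ₗ[R] R) : Prop :=
  ∀ a : A, TensorProduct.rid R A (lTensor A lam (comul a)) = lam a • 1

variable {lam : A →ₗ[R] R}

theorem isRightIntegral_and_eq_one_iff (hinj : Function.Injective ((mul R A).compr₂ lam))
    {Λ : A} : IsRightIntegral R Λ ∧ lam Λ = 1 ↔ ∀ b, lam (Λ * b) = counit b := by
  constructor
  · rintro ⟨hright, hone⟩ b
    rw [hright, map_smul, hone, smul_eq_mul, mul_one]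
  · intro hΛ
    refine ⟨fun a => hinj (LinearMap.ext fun b => ?_), by simpa using hΛ 1⟩
    simp [mul_assoc, hΛ]

end Bialgebra

variable [HopfAlgebra R A] {lam : A →ₗ[R] R}

/-- `S(a₍₁₎) T(a₍₂₎ ⊗ a₍₃₎) = T(1 ⊗ a)`. -/
theorem mul'_map_antipode_lTensor_comul_of_map_tmul_eq_mul {T : A ⊗[R] A →ₗ[R] A}
    (hT : ∀ x z, T (x ⊗ₜ z) = x * T (1 ⊗ₜ z)) (a : A) :
    mul' R A (map (antipode R) T (lTensor A comul (comul a))) = T (1 ⊗ₜ a) := by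
  have hsplit : ∀ (w : A ⊗[R] A) (z : A),
      mul' R A (map (antipode R) T (TensorProduct.assoc R A A A (w ⊗ₜ z))) =
        mul' R A (rTensor A (antipode R) w) * T (1 ⊗ₜ z) := by
    intro w z
    induction w using TensorProduct.induction_on with
    | zero => simp
    | tmul p q => simp [hT q, mul_assoc]
    | add w w' hw hw' => simp only [add_tmul, map_add, hw, hw', add_mul]
  have hcollapse : ∀ u : A ⊗[R] A,
      mul' R A (map (antipode R) T (TensorProduct.assoc R A A A (rTensor A comul u))) =
        T (1 ⊗ₜ TensorProduct.lid R A (rTensor A counit u)) := by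
    intro u
    induction u using TensorProduct.induction_on with
    | zero => simp
    | tmul x z =>
      rw [rTensor_tmul, hsplit, mul_antipode_rTensor_comul_apply, rTensor_tmul,
        TensorProduct.lid_tmul, tmul_smul, map_smul, Algebra.smul_def]
    | add u u' hu hu' => simp only [map_add, hu, hu', tmul_add]
  rw [← coassoc_apply, hcollapse, rTensor_counit_comul, TensorProduct.lid_tmul, one_smul]

/-- `b₍₁₎ λ(a b₍₂₎) = S(a₍₁₎) λ(a₍₂₎ b)`. -/
theorem IsLeftIntegral.rid_lTensor_tmul_mul_comul (hlam : IsLeftIntegral lam) (a b : A) :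
    TensorProduct.rid R A (lTensor A lam ((1 ⊗ₜ a) * comul b)) =
      TensorProduct.rid R A (map (antipode R) (lam ∘ₗ mulRight R b) (comul a)) := by
  set T : A ⊗[R] A →ₗ[R] A :=
    (TensorProduct.rid R A).toLinearMap ∘ₗ lTensor A lam ∘ₗ mulRight R (comul b)
  have hT : ∀ x z, T (x ⊗ₜ z) = x * T (1 ⊗ₜ z) := fun x z => by
    suffices ∀ w : A ⊗[R] A, TensorProduct.rid R A (lTensor A lam ((x ⊗ₜ z) * w)) =
        x * TensorProduct.rid R A (lTensor A lam ((1 ⊗ₜ z) * w)) from this (comul b)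
    intro w
    induction w using TensorProduct.induction_on with
    | zero => simp
    | tmul p q => simp
    | add w w' hw hw' => simp only [mul_add, map_add, hw, hw']
  have hT_comul : ∀ y, T (comul y) = lam (y * b) • 1 := fun y => by
    simp [T, ← Bialgebra.comul_mul, hlam (y * b)]
  calc _ = T (1 ⊗ₜ a) := rfl
    _ = mul' R A (map (antipode R) T (lTensor A comul (comul a))) :=
      (mul'_map_antipode_lTensor_comul_of_map_tmul_eq_mul hT a).symm
    _ = _ := by
      induction comul (R := R) a using TensorProduct.induction_on with
      | zero => simp
      | tmul p q => simp [hT_comul]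
      | add w w' hw hw' => simp only [map_add, hw, hw']

/-- `λ(h(S a₍₁₎) a₍₂₎ b) = h(b₍₁₎ λ(a b₍₂₎))`. -/
theorem IsLeftIntegral.apply_lid_rTensor_comul_mul (hlam : IsLeftIntegral lam) (h : A →ₗ[R] R)
    (a b : A) :
    lam (TensorProduct.lid R A (rTensor A (h ∘ₗ antipode R) (comul a)) * b) =
      h (TensorProduct.rid R A (lTensor A lam ((1 ⊗ₜ a) * comul b))) := by
  rw [hlam.rid_lTensor_tmul_mul_comul]
  induction comul (R := R) a using TensorProduct.induction_on with
  | zero => simp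
  | tmul p q => simp [mul_comm]
  | add w w' hw hw' => simp only [map_add, add_mul, hw, hw']

theorem IsLeftIntegral.exists_mul_eq_counit [Module.Free R A] [Module.Finite R A]
    (hlam : IsLeftIntegral lam) {c : A} (hc : lam c = 1) :
    ∃ Λ : A, ∀ b, lam (Λ * b) = counit b := by
  let B := Module.Free.chooseBasis R A
  have hsum : ∀ w : A ⊗[R] A, ∑ i, B.coord i (antipode R
      (TensorProduct.rid R A (lTensor A lam ((1 ⊗ₜ (c * B i)) * w)))) =
        lam (c * mul' R A (rTensor A (antipode R) w)) := by
    intro w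
    induction w using TensorProduct.induction_on with
    | zero => simp
    | tmul x y =>
      calc _ = ∑ i, lam (c * (B.repr (antipode R x) i • B i * y)) := by
            simp [mul_comm, mul_assoc]
        _ = _ := by
          rw [← map_sum, ← Finset.mul_sum, ← Finset.sum_mul, B.sum_repr, rTensor_tmul, mul'_apply]
    | add w w' hw hw' => simp only [mul_add, map_add, Finset.sum_add_distrib, hw, hw']
  refine ⟨∑ i, TensorProduct.lid R A
    (rTensor A ((B.coord i ∘ₗ antipode R) ∘ₗ antipode R) (comul (c * B i))), fun b => ?_⟩
  calc _ = ∑ i, (B.coord i ∘ₗ antipode R)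
        (TensorProduct.rid R A (lTensor A lam ((1 ⊗ₜ (c * B i)) * comul b))) := by
        simp only [Finset.sum_mul, map_sum, hlam.apply_lid_rTensor_comul_mul]
    _ = lam (c * mul' R A (rTensor A (antipode R) (comul b))) := hsum _
    _ = counit b := by
      rw [mul_antipode_rTensor_comul_apply, Algebra.algebraMap_eq_smul_one, mul_smul_comm,
        mul_one, map_smul, hc, smul_eq_mul, mul_one]

theorem IsLeftIntegral.surjective_mul_compr₂ (hlam : IsLeftIntegral lam) {Λ : A}
    (hΛ : ∀ b, lam (Λ * b) = counit b) : Function.Surjective ((mul R A).compr₂ lam) := by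
  intro g
  have hcounit : ∀ w : A ⊗[R] A, TensorProduct.rid R A (lTensor A lam ((1 ⊗ₜ Λ) * w)) =
      TensorProduct.rid R A (lTensor A counit w) := by
    intro w
    induction w using TensorProduct.induction_on with
    | zero => simp
    | tmul x y => simp [hΛ]
    | add w w' hw hw' => simp only [mul_add, map_add, hw, hw']
  refine ⟨TensorProduct.lid R A (rTensor A (g ∘ₗ antipode R) (comul Λ)),
    LinearMap.ext fun b => ?_⟩
  rw [compr₂_apply, mul_apply', hlam.apply_lid_rTensor_comul_mul, hcounit, lTensor_counit_comul,
    TensorProduct.rid_tmul, one_smul]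

end HopfAlgebra

open HopfAlgebra

/-- Let `A` be a finite-dimensional Hopf algebra over a field `k` and let
`λ : A → k` be a nonzero left integral in the dual.  Then there exists a unique right
integral `Λ ∈ A` such that `λ(Λ) = 1`. -/
theorem existsUnique_right_integral (k A : Type*) [Field k] [Ring A] 
    [HopfAlgebra k A] [FiniteDimensional k A]
    (lam : A →ₗ[k] k) (hne : lam ≠ 0)
    (hlam : ∀ a : A, (TensorProduct.rid k A)
        ((LinearMap.lTensor A lam) (Coalgebra.comul (R := k) a)) = lam a • 1) :
    ∃! Λ : A, (∀ a : A, Λ * a = Coalgebra.counit (R := k) a • Λ) ∧ lam Λ = 1 := by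
  obtain ⟨c, hc⟩ := LinearMap.surjective_of_ne_zero hne 1
  obtain ⟨Λ, hΛ⟩ := IsLeftIntegral.exists_mul_eq_counit hlam hc
  have hinj : Function.Injective ((mul k A).compr₂ lam) :=
    (injective_iff_surjective_of_finrank_eq_finrank Subspace.dual_finrank_eq.symm).mpr
      (IsLeftIntegral.surjective_mul_compr₂ hlam hΛ)
  refine ⟨Λ, (isRightIntegral_and_eq_one_iff hinj).mpr hΛ, fun Λ' hΛ' => ?_⟩
  refine hinj (LinearMap.ext fun b => ?_)
  rw [compr₂_apply, compr₂_apply, mul_apply', mul_apply',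
    (isRightIntegral_and_eq_one_iff hinj).mp hΛ' b, hΛ b]
end

section
/- Let A be a finite-dimensional unimodular Hopf algebra over a field k and let λ : A → k be a left integral in the dual. Then for all a, b ∈ A, λ(ab) = λ(b S(S(a))). -/
/-!
A nonzero left integral `λ` in the dual is nondegenerate. The key identity is
`b₍₁₎ λ(a b₍₂₎) = S(a₍₁₎) λ(a₍₂₎ b)`. If `λ(A y) = 0`, write `Δ y = ∑ eᵢ ⊗ cᵢ` in a basis; the
identity shows that every `cᵢ` again satisfies `λ(A cᵢ) = 0`. Since `ε(y) 1 = ∑ S(eᵢ) cᵢ` and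
`λ ≠ 0`, the counit vanishes on all such elements, so `y = ∑ ε(cᵢ) eᵢ = 0`.

In finite dimension `c ↦ λ(· c)` is therefore onto `A*`. This gives an element `Λ` with
`λ(x Λ) = ε(x)`, which is a left integral, hence by unimodularity a right integral with `λ(Λ) = 1`.
It also gives, for each `a`, an element `c` with `λ(x c) = λ(a x)`. Applying the key identity
twice then shows `c = S²(a)`.
-/

open scoped TensorProduct

namespace Coalgebra
variable {R A ι : Type*} [CommSemiring R] [AddCommMonoid A] [Module R A] [Coalgebra R A]

/-- The left hit action `f ⇀ a = a₍₁₎ f(a₍₂₎)` of the dual. -/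
noncomputable def leftHit (f : A →ₗ[R] R) : A →ₗ[R] A :=
  (_root_.TensorProduct.rid R A).toLinearMap ∘ₗ f.lTensor A ∘ₗ comul

theorem leftHit_apply (f : A →ₗ[R] R) (a : A) :
    leftHit f a = _root_.TensorProduct.rid R A (f.lTensor A (comul a)) := rfl

@[simp] theorem leftHit_counit (a : A) : leftHit (counit (R := R)) a = a := by
  simp [leftHit_apply]

variable [DecidableEq ι]

noncomputable def Repr.ofBasisLeft (e : Module.Basis ι R A) (a : A) : Repr R a ι where
  index := (TensorProduct.equivFinsuppOfBasisLeft e (comul a)).support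
  left := e
  right := TensorProduct.equivFinsuppOfBasisLeft e (comul a)
  eq := by
    conv_rhs => rw [← (TensorProduct.equivFinsuppOfBasisLeft e).symm_apply_apply (comul a),
      TensorProduct.equivFinsuppOfBasisLeft_symm_apply]
    rfl

theorem Repr.apply_ofBasisLeft_right (e : Module.Basis ι R A) (a : A) (f : A →ₗ[R] R)
    (i : ι) : f ((Repr.ofBasisLeft e a).right i) = e.coord i (leftHit f a) := by
  simp only [Repr.ofBasisLeft, TensorProduct.equivFinsuppOfBasisLeft_apply, leftHit_apply]
  induction comul (R := R) a with
  | zero => simp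
  | tmul u v => simp [mul_comm]
  | add t t' ht ht' => simp [ht, ht']

end Coalgebra

theorem TensorProduct.rid_lTensor_tmul_mul {R A : Type*} [CommSemiring R] [Semiring A]
    [Algebra R A] (f : A →ₗ[R] R) (x y : A) (t : A ⊗[R] A) :
    TensorProduct.rid R A (f.lTensor A ((x ⊗ₜ y) * t)) =
      x * TensorProduct.rid R A ((f ∘ₗ LinearMap.mulLeft R y).lTensor A t) := by
  induction t with
  | zero => simp
  | tmul u v => simp
  | add t t' ht ht' => simp [mul_add, ht, ht']

namespace HopfAlgebra
open Coalgebra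

section CommSemiring
variable {R A ι : Type*} [CommSemiring R] [Semiring A] [HopfAlgebra R A]

theorem sum_antipode_tmul_one_mul_comul {a : A} (r : Repr R a ι) :
    ∑ i ∈ r.index, (antipode R (r.left i) ⊗ₜ[R] (1 : A)) * comul (r.right i) = 1 ⊗ₜ a := by
  let Ψ : A ⊗[R] (A ⊗[R] A) →ₗ[R] A ⊗[R] A :=
    TensorProduct.lift
      (LinearMap.mul R (A ⊗[R] A) ∘ₗ (TensorProduct.mk R A A).flip 1 ∘ₗ antipode R)
  have hΨ : Ψ ∘ₗ (TensorProduct.assoc R A A A).toLinearMap =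
      (LinearMap.mul' R A ∘ₗ (antipode R).rTensor A).rTensor A := by
    ext; simp [Ψ]
  calc _ = Ψ (comul.lTensor A (comul a)) := by simp [← r.eq, Ψ, map_sum]
    _ = Ψ (TensorProduct.assoc R A A A (comul.rTensor A (comul a))) := by rw [coassoc_apply]
    _ = (LinearMap.mul' R A ∘ₗ (antipode R).rTensor A).rTensor A (comul.rTensor A (comul a)) :=
      LinearMap.congr_fun hΨ _
    _ = 1 ⊗ₜ a := by
      rw [← LinearMap.rTensor_comp_apply, LinearMap.comp_assoc, mul_antipode_rTensor_comul,
        LinearMap.rTensor_comp_apply, rTensor_counit_comul]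
      simp

theorem sum_antipode_mul_leftHit_mul (f : A →ₗ[R] R) {a : A} (r : Repr R a ι) (b : A) :
    ∑ i ∈ r.index, antipode R (r.left i) * leftHit f (r.right i * b) =
      leftHit (f ∘ₗ LinearMap.mulLeft R a) b := by
  have hterm : ∀ i, antipode R (r.left i) * leftHit f (r.right i * b) =
      TensorProduct.rid R A (f.lTensor A
        ((antipode R (r.left i) ⊗ₜ[R] (1 : A)) * comul (r.right i) * comul b)) := by
    intro i
    rw [mul_assoc, TensorProduct.rid_lTensor_tmul_mul, LinearMap.mulLeft_one,
      LinearMap.comp_id, leftHit_apply, Bialgebra.comul_mul]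
  rw [Finset.sum_congr rfl fun i _ => hterm i, ← map_sum, ← map_sum, ← Finset.sum_mul,
    sum_antipode_tmul_one_mul_comul, TensorProduct.rid_lTensor_tmul_mul, one_mul,
    leftHit_apply]

def IsLeftIntegralInDual (lam : A →ₗ[R] R) : Prop :=
  ∀ a : A, leftHit lam a = lam a • 1

variable {lam : A →ₗ[R] R}

/-- In Sweedler notation: `b₍₁₎ λ(a b₍₂₎) = S(a₍₁₎) λ(a₍₂₎ b)`. -/
theorem IsLeftIntegralInDual.leftHit_comp_mulLeft (hlam : IsLeftIntegralInDual lam) (a b : A) :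
    leftHit (lam ∘ₗ LinearMap.mulLeft R a) b =
      antipode R (leftHit (lam ∘ₗ LinearMap.mulRight R b) a) := by
  rw [← sum_antipode_mul_leftHit_mul lam (ℛ R a) b, leftHit_apply, ← (ℛ R a).eq]
  simp [hlam _, map_sum]

theorem IsLeftIntegralInDual.eq_antipode_antipode (hlam : IsLeftIntegralInDual lam)
    {Λ a c : A} (hΛr : lam ∘ₗ LinearMap.mulRight R Λ = counit)
    (hΛl : lam ∘ₗ LinearMap.mulLeft R Λ = counit)
    (hc : lam ∘ₗ LinearMap.mulRight R c = lam ∘ₗ LinearMap.mulLeft R a) :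
    c = antipode R (antipode R a) :=
  calc c = leftHit (lam ∘ₗ LinearMap.mulLeft R Λ) c := by rw [hΛl, leftHit_counit]
    _ = antipode R (leftHit (lam ∘ₗ LinearMap.mulLeft R a) Λ) := by
      rw [hlam.leftHit_comp_mulLeft, hc]
    _ = antipode R (antipode R a) := by
      rw [hlam.leftHit_comp_mulLeft, hΛr, leftHit_counit]

end CommSemiring

section Field
variable {k A : Type*} [Field k] [Ring A] [HopfAlgebra k A] {lam : A →ₗ[k] k}

theorem IsLeftIntegralInDual.eq_zero_of_forall_mul_eq_zero (hlam : IsLeftIntegralInDual lam)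
    (hne : lam ≠ 0) {y : A} (hy : ∀ x, lam (x * y) = 0) : y = 0 := by
  classical
  let e := Module.Free.chooseBasis k A
  have hright : ∀ y : A, (∀ x, lam (x * y) = 0) →
      ∀ i x, lam (x * (Repr.ofBasisLeft e y).right i) = 0 := by
    intro y hy i x
    have hzero : lam ∘ₗ LinearMap.mulRight k y = 0 := LinearMap.ext hy
    rw [← LinearMap.mulLeft_apply (R := k), ← LinearMap.comp_apply,
      Repr.apply_ofBasisLeft_right, hlam.leftHit_comp_mulLeft, hzero]
    simp [leftHit_apply]
  have hcounit : ∀ y : A, (∀ x, lam (x * y) = 0) → counit (R := k) y = 0 := by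
    intro y hy
    by_contra hεy
    refine hne (LinearMap.ext fun x => ?_)
    have : counit (R := k) y * lam x = 0 := by
      rw [← smul_eq_mul, ← map_smul, ← mul_one x, ← mul_smul_comm,
        ← sum_antipode_mul_eq_smul (Repr.ofBasisLeft e y), Finset.mul_sum, map_sum]
      exact Finset.sum_eq_zero fun i _ => by rw [← mul_assoc]; exact hright y hy i _
    simpa [hεy] using this
  refine e.forall_coord_eq_zero_iff.mp fun i => ?_
  rw [← leftHit_counit (R := k) y, ← Repr.apply_ofBasisLeft_right]
  exact hcounit _ (hright y hy i)

theorem IsLeftIntegralInDual.exists_comp_mulRight_eq [FiniteDimensional k A]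
    (hlam : IsLeftIntegralInDual lam) (hne : lam ≠ 0) (g : Module.Dual k A) :
    ∃ c : A, lam ∘ₗ LinearMap.mulRight k c = g := by
  let ℓ : A →ₗ[k] Module.Dual k A := (LinearMap.mul k A).flip.compr₂ lam
  have hinj : Function.Injective ℓ := by
    refine LinearMap.ker_eq_bot.mp (LinearMap.ker_eq_bot'.mpr fun c hc => ?_)
    exact hlam.eq_zero_of_forall_mul_eq_zero hne (LinearMap.congr_fun hc)
  exact (LinearMap.injective_iff_surjective_of_finrank_eq_finrank
    Subspace.dual_finrank_eq.symm).mp hinj g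

theorem IsLeftIntegralInDual.mul_eq_counit_smul (hlam : IsLeftIntegralInDual lam)
    (hne : lam ≠ 0) {Λ : A} (hΛ : lam ∘ₗ LinearMap.mulRight k Λ = counit) (x : A) :
    x * Λ = counit (R := k) x • Λ := by
  rw [← sub_eq_zero]
  refine hlam.eq_zero_of_forall_mul_eq_zero hne fun y => ?_
  have hΛ' : ∀ z, lam (z * Λ) = counit z := LinearMap.congr_fun hΛ
  simp [mul_sub, ← mul_assoc, hΛ', mul_comm]

end Field

end HopfAlgebra

/-- Let `A` be a finite-dimensional unimodular Hopf algebra over a field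
`k` (the left integrals in `A` coincide with the right integrals in `A`) and let `λ` be a
left integral in the dual.  Then `λ(ab) = λ(b S(S(a)))` for all `a b ∈ A`. -/
theorem lam_mul_eq_lam_mul_antipode_sq (k A : Type*) [Field k] [Ring A] [HopfAlgebra k A]
    [FiniteDimensional k A]
    (hu : ∀ Λ : A, (∀ a : A, a * Λ = Coalgebra.counit (R := k) a • Λ) ↔
      (∀ a : A, Λ * a = Coalgebra.counit (R := k) a • Λ))
    (lam : A →ₗ[k] k)
    (hlam : ∀ a : A, (TensorProduct.rid k A)
        ((LinearMap.lTensor A lam) (Coalgebra.comul (R := k) a)) = lam a • 1) :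
    ∀ a b : A, lam (a * b) =
      lam (b * HopfAlgebra.antipode (R := k) (HopfAlgebra.antipode (R := k) a)) := by
  intro a b
  obtain rfl | hne := eq_or_ne lam 0
  · simp
  have hlam : HopfAlgebra.IsLeftIntegralInDual lam := hlam
  obtain ⟨Λ, hΛr⟩ := hlam.exists_comp_mulRight_eq hne Coalgebra.counit
  have hΛ_rightIntegral : ∀ x, Λ * x = Coalgebra.counit (R := k) x • Λ :=
    (hu Λ).mp (hlam.mul_eq_counit_smul hne hΛr)
  have hΛl : lam ∘ₗ LinearMap.mulLeft k Λ = Coalgebra.counit := by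
    have hlamΛ : lam Λ = 1 := by simpa using LinearMap.congr_fun hΛr 1
    ext x
    simp [hΛ_rightIntegral, hlamΛ]
  obtain ⟨c, hc⟩ := hlam.exists_comp_mulRight_eq hne (lam ∘ₗ LinearMap.mulLeft k a)
  rw [← hlam.eq_antipode_antipode hΛr hΛl hc]
  exact (LinearMap.congr_fun hc b).symm
end

section
/- Let A be a Hopf algebra over a field k and let Λ ∈ A be a two-sided integral (both a left and a right integral). Then for every a ∈ A the following equality holds in A ⊗ A: a₍₁₎ S(Λ₍₁₎) S(a₍₂₎) ⊗ a₍₃₎ Λ₍₂₎ S(a₍₄₎) = ε(a) · (S(Λ₍₁₎) ⊗ Λ₍₂₎). In other words, the element U = S(Λ₍₁₎) ⊗ Λ₍₂₎ is invariant under the diagonal conjugate action a · (b ⊗ c) = (a₍₁₎ ▷ b) ⊗ (a₍₂₎ ▷ c), where a ▷ b = a₍₁₎ b S(a₍₂₎). -/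
/-!
Write `U = (S ⊗ id) Δ(Λ) = S(Λ₁) ⊗ Λ₂`. Since `Λ` is a left integral, `Δ(b) Δ(Λ) = ε(b) Δ(Λ)`;
after applying `S ⊗ id` this absorbs the middle pair `a₂ ⊗ a₃` of the action, leaving
`(a₁ ⊗ 1) U (1 ⊗ S(a₂))`. Since `Λ` is a right integral, `Δ(Λ)(c ⊗ 1) = Δ(Λ)(1 ⊗ S(c))`, i.e.
`U (1 ⊗ S(c)) = (S(c) ⊗ 1) U`, so what is left equals `(a₁ S(a₂) ⊗ 1) U = ε(a) U`.
-/

open Coalgebra HopfAlgebra TensorProduct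

namespace Coalgebra

variable {R A ι : Type*} [CommSemiring R] [AddCommMonoid A] [Module R A] [Coalgebra R A] {a : A}

lemma sum_counit_right_smul (𝓡 : Repr R a ι) :
    ∑ i ∈ 𝓡.index, counit (R := R) (𝓡.right i) • 𝓡.left i = a := by
  simpa only [map_sum, _root_.TensorProduct.rid_tmul, one_smul]
    using congr(_root_.TensorProduct.rid R A $(sum_tmul_counit_eq 𝓡))

lemma rTensor_comul_comul_eq_sum {κ : ι → Type*} (𝓡 : Repr R a ι)
    (𝓡₂ : ∀ i, Repr R (𝓡.right i) (κ i)) :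
    comul.rTensor A (comul (R := R) a) = ∑ i ∈ 𝓡.index, ∑ j ∈ (𝓡₂ i).index,
      (𝓡.left i ⊗ₜ[R] (𝓡₂ i).left j) ⊗ₜ[R] (𝓡₂ i).right j := by
  rw [← coassoc_symm_apply, ← 𝓡.eq, map_sum, map_sum]
  refine Finset.sum_congr rfl fun i _ => ?_
  simp [← (𝓡₂ i).eq, tmul_sum]

end Coalgebra

namespace HopfAlgebra

variable {R A : Type*} [CommSemiring R] [Semiring A] [HopfAlgebra R A]

lemma rTensor_antipode_tmul_mul (x y : A) (u : A ⊗[R] A) :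
    (antipode R).rTensor A ((x ⊗ₜ[R] y) * u) =
      (1 ⊗ₜ y) * (antipode R).rTensor A u * (antipode R x ⊗ₜ 1) := by
  induction u using TensorProduct.induction_on with
  | zero => simp
  | tmul p q => simp [antipode_mul_antidistrib]
  | add u v hu hv => simp [mul_add, add_mul, hu, hv]

lemma rTensor_antipode_mul_tmul (u : A ⊗[R] A) (x y : A) :
    (antipode R).rTensor A (u * (x ⊗ₜ[R] y)) =
      (antipode R x ⊗ₜ 1) * (antipode R).rTensor A u * (1 ⊗ₜ y) := by
  induction u using TensorProduct.induction_on with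
  | zero => simp
  | tmul p q => simp [antipode_mul_antidistrib]
  | add u v hu hv => simp [mul_add, add_mul, hu, hv]

/-- On the iterated coproduct `((a₁ ⊗ a₂) ⊗ a₃) ⊗ a₄` this is the diagonal conjugate action
`a₁ u' S(a₂) ⊗ a₃ u'' S(a₄)` of `a` on `u = u' ⊗ u''`. -/
noncomputable def diagConj (u : A ⊗[R] A) : ((A ⊗[R] A) ⊗[R] A) ⊗[R] A →ₗ[R] A ⊗[R] A :=
  LinearMap.mul' R (A ⊗[R] A) ∘ₗ
    map (LinearMap.mulRight R u) (map (antipode R) (antipode R)) ∘ₗ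
    (tensorTensorTensorComm R A A A A).toLinearMap ∘ₗ
    (TensorProduct.assoc R (A ⊗[R] A) A A).toLinearMap

@[simp] lemma diagConj_tmul (u : A ⊗[R] A) (α β γ δ : A) :
    diagConj u (((α ⊗ₜ[R] β) ⊗ₜ[R] γ) ⊗ₜ[R] δ) =
      (α ⊗ₜ γ) * u * (antipode R β ⊗ₜ antipode R δ) := by
  simp [diagConj]

section Integral

variable {Λ : A}

lemma sum_one_tmul_mul_rTensor_antipode_comul_mul
    (hl : ∀ b : A, b * Λ = counit (R := R) b • Λ) {c : A} {ι : Type*} (𝓡 : Repr R c ι) :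
    ∑ i ∈ 𝓡.index, (1 ⊗ₜ 𝓡.right i) * (antipode R).rTensor A (comul Λ) *
        (antipode R (𝓡.left i) ⊗ₜ 1) = counit (R := R) c • (antipode R).rTensor A (comul Λ) := by
  have h : comul c * comul Λ = counit (R := R) c • comul (R := R) Λ := by
    rw [← Bialgebra.comul_mul, hl, map_smul]
  simpa [← 𝓡.eq, Finset.sum_mul, rTensor_antipode_tmul_mul]
    using congr((antipode R).rTensor A $h)

/-- Both sides are the value of `u ⊗ z ↦ Δ(Λ) u (1 ⊗ S(z))` at `(Δ ⊗ id) Δ(c)`, read through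
the two bracketings of the threefold coproduct. -/
lemma comul_mul_tmul_one (hr : ∀ b : A, Λ * b = counit (R := R) b • Λ) (c : A) :
    comul Λ * (c ⊗ₜ 1) = comul (R := R) Λ * (1 ⊗ₜ antipode R c) := by
  let g : (A ⊗[R] A) ⊗[R] A →ₗ[R] A ⊗[R] A := LinearMap.mul' R (A ⊗[R] A) ∘ₗ
    map (LinearMap.mulLeft R (comul Λ))
      (Algebra.TensorProduct.includeRight.toLinearMap ∘ₗ antipode R)
  have hg (u : A ⊗[R] A) (z : A) : g (u ⊗ₜ z) = comul Λ * u * (1 ⊗ₜ antipode R z) := by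
    simp [g]
  let 𝓡 := ℛ R c
  have h₁ : g (comul.rTensor A (comul c)) = comul Λ * (1 ⊗ₜ antipode R c) := by
    have h : ∀ b, comul Λ * comul b = counit (R := R) b • comul (R := R) Λ := fun b => by
      rw [← Bialgebra.comul_mul, hr, map_smul]
    conv_rhs => rw [← sum_counit_smul 𝓡]
    simp [← 𝓡.eq, hg, h, tmul_sum, Finset.mul_sum, tmul_smul]
  have h₂ : g (comul.rTensor A (comul c)) = comul Λ * (c ⊗ₜ 1) := by
    rw [rTensor_comul_comul_eq_sum 𝓡 fun i => ℛ R (𝓡.right i)]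
    conv_rhs => rw [← sum_counit_right_smul 𝓡]
    simp [hg, mul_assoc, ← Finset.mul_sum, ← tmul_sum, sum_mul_antipode_eq_smul, sum_tmul,
      smul_tmul']
  rw [← h₁, h₂]

lemma rTensor_antipode_comul_mul_one_tmul (hr : ∀ b : A, Λ * b = counit (R := R) b • Λ) (c : A) :
    (antipode R).rTensor A (comul Λ) * (1 ⊗ₜ antipode R c) =
      (antipode R c ⊗ₜ 1) * (antipode R).rTensor A (comul (R := R) Λ) := by
  simpa [rTensor_antipode_mul_tmul, ← Algebra.TensorProduct.one_def]
    using congr((antipode R).rTensor A $(comul_mul_tmul_one hr c)).symm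

lemma diagConj_rTensor_comul_comul_tmul (hl : ∀ b : A, b * Λ = counit (R := R) b • Λ) (b z : A) :
    diagConj ((antipode R).rTensor A (comul Λ)) (comul.rTensor A (comul b) ⊗ₜ z) =
      (b ⊗ₜ 1) * (antipode R).rTensor A (comul (R := R) Λ) * (1 ⊗ₜ antipode R z) := by
  have hsplit (x y y' : A) :
      diagConj ((antipode R).rTensor A (comul Λ)) (((x ⊗ₜ y) ⊗ₜ y') ⊗ₜ z) =
        (x ⊗ₜ 1) * ((1 ⊗ₜ y') * (antipode R).rTensor A (comul (R := R) Λ) *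
          (antipode R y ⊗ₜ 1)) * (1 ⊗ₜ antipode R z) := by
    simp only [diagConj_tmul, mul_assoc, Algebra.TensorProduct.tmul_mul_tmul, mul_one, one_mul]
    simp only [← mul_assoc, Algebra.TensorProduct.tmul_mul_tmul, mul_one, one_mul]
  let 𝓡 := ℛ R b
  rw [rTensor_comul_comul_eq_sum 𝓡 fun i => ℛ R (𝓡.right i)]
  conv_rhs => rw [← sum_counit_right_smul 𝓡]
  simp only [sum_tmul, map_sum, hsplit, ← Finset.sum_mul, ← Finset.mul_sum,
    sum_one_tmul_mul_rTensor_antipode_comul_mul hl, mul_smul_comm, smul_mul_assoc, ← smul_tmul']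
  simp only [Finset.sum_mul, smul_mul_assoc]

lemma diagConj_iterate_comul_eq_counit_smul (hl : ∀ b : A, b * Λ = counit (R := R) b • Λ)
    (hr : ∀ b : A, Λ * b = counit (R := R) b • Λ) (a : A) :
    diagConj ((antipode R).rTensor A (comul Λ))
        ((comul.rTensor A).rTensor A (comul.rTensor A (comul a))) =
      counit (R := R) a • (antipode R).rTensor A (comul (R := R) Λ) := by
  let 𝓡 := ℛ R a
  rw [← 𝓡.eq]
  simp only [map_sum, LinearMap.rTensor_tmul, diagConj_rTensor_comul_comul_tmul hl, mul_assoc,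
    rTensor_antipode_comul_mul_one_tmul hr]
  simp only [← mul_assoc, Algebra.TensorProduct.tmul_mul_tmul, mul_one, ← Finset.sum_mul,
    ← sum_tmul, sum_mul_antipode_eq_smul, ← smul_tmul', ← Algebra.TensorProduct.one_def,
    smul_mul_assoc, one_mul]

end Integral

end HopfAlgebra

/-- Let `A` be a Hopf algebra over a field `k` and `Λ ∈ A` a two-sided
integral.  Then for every `a ∈ A`,
`a₍₁₎ S(Λ₍₁₎) S(a₍₂₎) ⊗ a₍₃₎ Λ₍₂₎ S(a₍₄₎) = ε(a) • (S(Λ₍₁₎) ⊗ Λ₍₂₎)` in `A ⊗ A`, i.e. the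
element `U = S(Λ₍₁₎) ⊗ Λ₍₂₎` is invariant under the diagonal conjugate action.  Here
`a₍₁₎ ⊗ a₍₂₎ ⊗ a₍₃₎ ⊗ a₍₄₎` is the three-fold iterated coproduct of `a` and
`Λ₍₁₎ ⊗ Λ₍₂₎ = Δ(Λ)`. -/
theorem U_invariant (k A : Type*) [Field k] [Ring A] [HopfAlgebra k A]
    (Λ : A)
    (hl : ∀ a : A, a * Λ = Coalgebra.counit (R := k) a • Λ)
    (hr : ∀ a : A, Λ * a = Coalgebra.counit (R := k) a • Λ)
    (a : A)
    (ι : Type*) (s : Finset ι) (w x y z : ι → A)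
    (ha3 : (LinearMap.rTensor A (LinearMap.rTensor A (Coalgebra.comul (R := k) (A := A))))
        ((LinearMap.rTensor A (Coalgebra.comul (R := k) (A := A)))
          (Coalgebra.comul (R := k) a))
      = ∑ i ∈ s, ((w i ⊗ₜ[k] x i) ⊗ₜ[k] y i) ⊗ₜ[k] z i)
    (κ : Type*) (t : Finset κ) (Λ1 Λ2 : κ → A)
    (hΛrep : Coalgebra.comul (R := k) Λ = ∑ j ∈ t, Λ1 j ⊗ₜ[k] Λ2 j) :
    ∑ i ∈ s, ∑ j ∈ t,
        (w i * HopfAlgebra.antipode (R := k) (Λ1 j) * HopfAlgebra.antipode (R := k) (x i))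
          ⊗ₜ[k] (y i * Λ2 j * HopfAlgebra.antipode (R := k) (z i)) =
      Coalgebra.counit (R := k) a •
        ∑ j ∈ t, HopfAlgebra.antipode (R := k) (Λ1 j) ⊗ₜ[k] Λ2 j := by
  have hU : (antipode k).rTensor A (comul Λ) = ∑ j ∈ t, antipode k (Λ1 j) ⊗ₜ[k] Λ2 j := by
    simp [hΛrep, map_sum]
  rw [← hU, ← diagConj_iterate_comul_eq_counit_smul hl hr, ha3, hU]
  simp [map_sum, Finset.mul_sum, Finset.sum_mul]
end
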